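/- Let T = cS with c ∈ Π, where S is a p-string of length n ≥ 1 ending with $, with $ occurring nowhere else in S. Then: (i) ⟦T⟧[1] = |Π|_S| + 1 if Left_S(c) = 0, and ⟦T⟧[1] = |Π|_{S[1:Left_S(c)]}| otherwise. (ii) For 1 ≤ p ≤ n, if S[p] ∈ Σ or p ≠ Right_S(S[p]), then ⟦T⟧[p+1] = ⟦S⟧[p]. (iii) If S[p] = a ∈ Π and p = Right_S(a), then ⟦T⟧[p+1] = |Π|_{S[p+1:n]}| + 1 if a = c; ⟦T⟧[p+1] = ⟦S⟧[p] + 1 if Left_S(c) = 0 or Left_S(a) < Left_S(c) ≤ Right_S(c) < Right_S(a); and ⟦T⟧[p+1] = ⟦S⟧[p] otherwise. -/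

import Mathlib

/-! Common framework: parameterized strings over static alphabet `σ` and
parameter alphabet `π`.  A p-string is a `List (σ ⊕ π)`. -/

variable {σ π : Type*}

instance instInhabSum [Inhabited σ] : Inhabited (σ ⊕ π) := ⟨Sum.inl default⟩

/-- one right rotation: the last character moves to the front -/
def rotR1 {α : Type*} (W : List α) : List α := W.rotate (W.length - 1)

/-- `rotR W i` is the `i`-th right rotation `Rot(W, i)` -/
def rotR {α : Type*} (W : List α) : ℕ → List α
  | 0 => W
  | i + 1 => rotR1 (rotR W i)

/-- 1-based access `W[i]` (junk default outside the range) -/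
def get1 {α : Type*} [Inhabited α] (W : List α) (i : ℕ) : α := W.getD (i - 1) default

/-- the prev-encoding `⟨T⟩`, a list over `σ ⊕ ℕ∞` -/
def prevEnc [DecidableEq σ] [DecidableEq π] (T : List (σ ⊕ π)) : List (σ ⊕ ℕ∞) :=
  (List.range T.length).map fun k =>
    match T[k]? with
    | none => Sum.inr ⊤
    | some (Sum.inl a) => Sum.inl a
    | some (Sum.inr b) =>
      match ((List.range k).filter fun j => T[j]? = some (Sum.inr b)).max? with
      | none => Sum.inr ⊤
      | some j => Sum.inr ((k - j : ℕ) : ℕ∞)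

/-- number of distinct parameter characters occurring in `W` -/
def distinctParams [DecidableEq π] (W : List (σ ⊕ π)) : ℕ :=
  (W.filterMap Sum.getRight?).dedup.length

/-- the encoding `⟦T⟧`, a list over `σ ⊕ ℕ`:  a static character is kept; a
parameter character at (1-based) position `i` is replaced by the number of
distinct parameter characters in `Rot(T, n-i)[1:ℓ]` where `ℓ` is the leftmost
occurrence position of `T[i]` in `Rot(T, n-i)`. -/
def encodeE [DecidableEq σ] [DecidableEq π] (T : List (σ ⊕ π)) : List (σ ⊕ ℕ) :=
  (List.range T.length).map fun k =>
    match T[k]? with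
    | none => Sum.inr 0
    | some (Sum.inl a) => Sum.inl a
    | some (Sum.inr b) =>
      let R := rotR T (T.length - (k + 1))
      Sum.inr (distinctParams (R.take (R.idxOf (Sum.inr b) + 1)))

/-- order on prev-encoding characters: every static character is smaller than
every element of `ℕ∞` (and `ℕ∞` carries its usual order with `∞` on top) -/
def pvlt [LT σ] : (σ ⊕ ℕ∞) → (σ ⊕ ℕ∞) → Prop
  | Sum.inl a, Sum.inl b => a < b
  | Sum.inl _, Sum.inr _ => True
  | Sum.inr _, Sum.inl _ => False
  | Sum.inr x, Sum.inr y => x < y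

/-- `T` is a p-string of length ≥ 1 ending with the static character `d`,
which occurs nowhere else in `T`. -/
def EndsWith [DecidableEq σ] [DecidableEq π] (T : List (σ ⊕ π)) (d : σ) : Prop :=
  1 ≤ T.length ∧ T.getLast? = some (Sum.inl d) ∧ T.count (Sum.inl d) = 1

/-- `RA` represents the parameterized rotation array `RA_T` (0-based indices:
`RA_T[i] = (RA ⟨i-1⟩).val + 1`): the prev-encodings of the rotations are listed
in strictly increasing lexicographic order. -/
def IsRA [LinearOrder σ] [DecidableEq π] (T : List (σ ⊕ π))
    (RA : Fin T.length ≃ Fin T.length) : Prop :=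
  ∀ i j : Fin T.length, i < j →
    List.Lex pvlt (prevEnc (rotR T ((RA i).val + 1))) (prevEnc (rotR T ((RA j).val + 1)))

/-- `LF` represents the LF mapping: `LF_T(i) = j` iff `T_{RA_T[i]+1} = T_{RA_T[j]}`. -/
def IsLF [LinearOrder σ] [DecidableEq π] (T : List (σ ⊕ π))
    (RA LF : Fin T.length ≃ Fin T.length) : Prop :=
  ∀ i : Fin T.length, rotR T ((RA i).val + 2) = rotR T ((RA (LF i)).val + 1)

/-- the pBWT array `L_T[i] = ⟦T_{RA_T[i]}⟧[n]` -/
def Larr [LinearOrder σ] [DecidableEq π] [Inhabited σ] (T : List (σ ⊕ π))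
    (RA : Fin T.length ≃ Fin T.length) (i : Fin T.length) : σ ⊕ ℕ :=
  get1 (encodeE (rotR T ((RA i).val + 1))) T.length

/-- the array `F_T[i] = ⟦T_{RA_T[i]}⟧[1]` -/
def Farr [LinearOrder σ] [DecidableEq π] [Inhabited σ] (T : List (σ ⊕ π))
    (RA : Fin T.length ≃ Fin T.length) (i : Fin T.length) : σ ⊕ ℕ :=
  get1 (encodeE (rotR T ((RA i).val + 1))) 1

/-- longest common prefix of two lists -/
def lcp {α : Type*} [DecidableEq α] : List α → List α → List α
  | a :: as, b :: bs => if a = b then a :: lcp as bs else []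
  | _, _ => []

/-- `lcp∞(X, Y)`: the number of `∞`'s in the longest common prefix of `X` and `Y` -/
def lcpInf [DecidableEq σ] (X Y : List (σ ⊕ ℕ∞)) : ℕ :=
  (lcp X Y).count (Sum.inr ⊤)

/-- the `∞`-LCP array (1-based): `LCP∞_T[i] = lcp∞(⟨T_{RA_T[i]}⟩, ⟨T_{RA_T[i+1]}⟩)`
for `1 ≤ i < n`, and `0` otherwise. -/
def LCPa [LinearOrder σ] [DecidableEq π] (T : List (σ ⊕ π))
    (RA : Fin T.length ≃ Fin T.length) (i : ℕ) : ℕ :=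
  if h : 1 ≤ i ∧ i < T.length then
    lcpInf (prevEnc (rotR T ((RA ⟨i - 1, by omega⟩).val + 1)))
           (prevEnc (rotR T ((RA ⟨i, h.2⟩).val + 1)))
  else 0

/-- parameterized match: a bijection on `σ ⊕ π` fixing all static characters
renames `S` into `T` -/
def PMatch (S T : List (σ ⊕ π)) : Prop :=
  ∃ f : (σ ⊕ π) ≃ (σ ⊕ π), (∀ a : σ, f (Sum.inl a) = Sum.inl a) ∧ S.map f = T

/-- leftmost (1-based) occurrence position of `c` in `W`, `0` if absent -/
def leftPos [DecidableEq σ] [DecidableEq π] (W : List (σ ⊕ π)) (c : σ ⊕ π) : ℕ :=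
  if W.contains c then W.idxOf c + 1 else 0

/-- rightmost (1-based) occurrence position of `c` in `W`, `0` if absent -/
def rightPos [DecidableEq σ] [DecidableEq π] (W : List (σ ⊕ π)) (c : σ ⊕ π) : ℕ :=
  if W.contains c then W.length - W.reverse.idxOf c else 0

/-! The `p`-th entry of `⟦T⟧` for a parameter `a = T[p]` counts the distinct parameters in the
window of the rotation `T[p+1..] ++ T[..p]` that ends at the first occurrence of `a`. Prepending
`c` to `S` only inserts `c` at the junction of that rotation. If `a` occurs again after `p`, the
window ends before the junction and nothing changes. If `p = Right_S(a)`, the window wraps around: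
for `a = c` it stops at the inserted `c`, and otherwise it is `S[p+1..] c S[1 : Left_S(a)]`, which
has one more distinct parameter exactly when `c` is absent from `S[p+1..] S[1 : Left_S(a)]`, i.e.
when `c` is absent from `S` or all its occurrences lie strictly between `Left_S(a)` and
`Right_S(a)`. -/

/- `List.idxOf` and `List.contains` in `encodeE`, `leftPos` and `rightPos` use `Sum`'s own `BEq`
instance, which the library does not know to be lawful. -/
instance instLawfulBEqSum {α β : Type*} [BEq α] [BEq β] [LawfulBEq α] [LawfulBEq β] :
    LawfulBEq (α ⊕ β) where
  eq_of_beq {a b} h := by cases a <;> cases b <;> simp_all [BEq.beq, Sum.instBEq.beq]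
  rfl {a} := by cases a <;> simp [BEq.beq, Sum.instBEq.beq]

theorem rotR_eq_rotate {α : Type*} (W : List α) {i : ℕ} (hi : i ≤ W.length) :
    rotR W i = W.rotate (W.length - i) := by
  induction i with
  | zero => simp [rotR]
  | succ i ih =>
    rw [rotR, rotR1, ih (by omega), List.length_rotate, List.rotate_rotate,
      show W.length - i + (W.length - 1) = W.length - (i + 1) + W.length by omega,
      ← List.rotate_mod, Nat.add_mod_right, List.rotate_mod]

theorem get1_cons_succ {α : Type*} [Inhabited α] (x : α) (W : List α) {p : ℕ} (hp : 1 ≤ p) :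
    get1 (x :: W) (p + 1) = get1 W p := by
  obtain ⟨q, rfl⟩ : ∃ q, p = q + 1 := ⟨p - 1, by omega⟩
  rfl

theorem get1_eq_getElem {α : Type*} [Inhabited α] {W : List α} {p : ℕ} (hp1 : 1 ≤ p)
    (hp : p ≤ W.length) : get1 W p = W[p - 1] :=
  List.getD_eq_getElem _ _ _

theorem get1_mem {α : Type*} [Inhabited α] {W : List α} {p : ℕ} (hp1 : 1 ≤ p)
    (hp : p ≤ W.length) : get1 W p ∈ W := by
  rw [get1_eq_getElem hp1 hp]
  exact List.getElem_mem _

section PrefixThrough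

variable {α : Type*} [BEq α] [LawfulBEq α] {x y : α} {A B W : List α}

/-- `W[1 : Left_W(x)]`; all of `W` when `x` does not occur in `W`. -/
def prefixThrough (x : α) (W : List α) : List α := W.take (W.idxOf x + 1)

theorem prefixThrough_append_of_mem (h : x ∈ A) :
    prefixThrough x (A ++ B) = prefixThrough x A := by
  rw [prefixThrough, prefixThrough, List.idxOf_append_of_mem h,
    List.take_append_of_le_length (List.idxOf_lt_length_of_mem h)]

theorem prefixThrough_append_of_notMem (h : x ∉ A) :
    prefixThrough x (A ++ B) = A ++ prefixThrough x B := by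
  rw [prefixThrough, prefixThrough, List.idxOf_append_of_notMem h, Nat.add_assoc,
    List.take_length_add_append]

theorem prefixThrough_cons_self : prefixThrough x (x :: B) = [x] := by
  simp [prefixThrough]

theorem prefixThrough_cons_of_ne (h : y ≠ x) :
    prefixThrough x (y :: B) = y :: prefixThrough x B := by
  simp [prefixThrough, h]

theorem prefixThrough_take_of_mem {n : ℕ} (h : x ∈ W.take n) :
    prefixThrough x (W.take n) = prefixThrough x W := by
  conv_rhs => rw [← List.take_append_drop n W]
  exact (prefixThrough_append_of_mem h).symm

end PrefixThrough

section Positions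

variable [DecidableEq σ] [DecidableEq π] {W : List (σ ⊕ π)} {x : σ ⊕ π}

theorem leftPos_of_mem (h : x ∈ W) : leftPos W x = W.idxOf x + 1 := by
  simp [leftPos, h]

theorem leftPos_pos_of_mem (h : x ∈ W) : 0 < leftPos W x := by
  rw [leftPos_of_mem h]
  exact Nat.succ_pos _

theorem leftPos_eq_zero_iff : leftPos W x = 0 ↔ x ∉ W := by
  by_cases h : x ∈ W <;> simp [leftPos, h]

theorem rightPos_of_notMem (h : x ∉ W) : rightPos W x = 0 := by
  simp [rightPos, h]

theorem prefixThrough_eq_take_leftPos (h : x ∈ W) : prefixThrough x W = W.take (leftPos W x) := by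
  rw [leftPos_of_mem h, prefixThrough]

theorem mem_take_iff_leftPos {n : ℕ} : x ∈ W.take n ↔ 0 < leftPos W x ∧ leftPos W x ≤ n := by
  by_cases h : x ∈ W
  · rw [List.mem_take_iff_idxOf_lt h, leftPos_of_mem h]
    omega
  · rw [leftPos_eq_zero_iff.2 h]
    exact iff_of_false (fun h' => h (List.mem_of_mem_take h')) (by omega)

theorem mem_drop_iff_lt_rightPos {n : ℕ} : x ∈ W.drop n ↔ n < rightPos W x := by
  by_cases h : x ∈ W
  · have hrev : W.reverse.idxOf x < W.length := by
      simpa using List.idxOf_lt_length_of_mem (List.mem_reverse.2 h)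
    rw [← List.mem_reverse, List.reverse_drop, List.mem_take_iff_idxOf_lt (List.mem_reverse.2 h)]
    simp [rightPos, h]
    omega
  · rw [rightPos_of_notMem h]
    exact iff_of_false (fun h' => h (List.mem_of_mem_drop h')) (by omega)

theorem leftPos_le_rightPos : leftPos W x ≤ rightPos W x := by
  by_cases h : x ∈ W
  · have hsplit : x ∈ W.take (W.idxOf x) ∨ x ∈ W.drop (W.idxOf x) := by
      rw [← List.mem_append, List.take_append_drop]; exact h
    rw [List.mem_take_iff_idxOf_lt h, mem_drop_iff_lt_rightPos] at hsplit
    rw [leftPos_of_mem h]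
    omega
  · simp [leftPos_eq_zero_iff.2 h]

theorem notMem_drop_rightPos : x ∉ W.drop (rightPos W x) := by
  rw [mem_drop_iff_lt_rightPos]
  exact lt_irrefl _

theorem le_rightPos_of_get1 [Inhabited σ] {p : ℕ} (hp1 : 1 ≤ p) (hp : p ≤ W.length)
    (hx : get1 W p = x) : p ≤ rightPos W x := by
  have hmem : x ∈ W.drop (p - 1) := by
    rw [List.drop_eq_getElem_cons (by omega), ← get1_eq_getElem hp1 hp, hx]
    exact List.mem_cons_self
  rw [mem_drop_iff_lt_rightPos] at hmem
  omega

theorem rightPos_ne_of_get1 [Inhabited σ] {p : ℕ} {y : σ ⊕ π} (hp1 : 1 ≤ p) (hp : p ≤ W.length)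
    (hy : get1 W p = y) (hxy : x ≠ y) : rightPos W x ≠ p := by
  have hdrop : x ∈ W.drop (p - 1) ↔ x ∈ W.drop p := by
    rw [List.drop_eq_getElem_cons (by omega), ← get1_eq_getElem hp1 hp, hy,
      show p - 1 + 1 = p by omega, List.mem_cons, or_iff_right hxy]
  rw [mem_drop_iff_lt_rightPos, mem_drop_iff_lt_rightPos] at hdrop
  omega

end Positions

theorem mem_filterMap_getRight? {W : List (σ ⊕ π)} {c : π} :
    c ∈ W.filterMap Sum.getRight? ↔ Sum.inr c ∈ W := by
  simp [List.mem_filterMap, Sum.getRight?_eq_some_iff]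

section DistinctParams

variable [DecidableEq π] {A B W : List (σ ⊕ π)} {c : π}

theorem distinctParams_perm (h : A.Perm B) : distinctParams A = distinctParams B :=
  ((h.filterMap _).dedup).length_eq

theorem distinctParams_append_cons (x : σ ⊕ π) :
    distinctParams (A ++ x :: B) = distinctParams (x :: (A ++ B)) :=
  distinctParams_perm List.perm_middle

theorem distinctParams_inr_cons_of_mem (h : Sum.inr c ∈ W) :
    distinctParams (Sum.inr c :: W) = distinctParams W := by
  simp [distinctParams, List.dedup_cons_of_mem (mem_filterMap_getRight?.2 h)]

theorem distinctParams_inr_cons_of_notMem (h : Sum.inr c ∉ W) :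
    distinctParams (Sum.inr c :: W) = distinctParams W + 1 := by
  simp [distinctParams, List.dedup_cons_of_notMem (mt mem_filterMap_getRight?.1 h)]

end DistinctParams

section Encoding

variable [DecidableEq σ] [DecidableEq π] [Inhabited σ] {T : List (σ ⊕ π)} {p : ℕ}

theorem get1_encodeE_of_inl {a : σ} (hp1 : 1 ≤ p) (hp : p ≤ T.length) (h : get1 T p = Sum.inl a) :
    get1 (encodeE T) p = Sum.inl a := by
  rw [get1_eq_getElem hp1 hp] at h
  rw [get1, List.getD_eq_getElem?_getD, encodeE, List.getElem?_map, List.getElem?_range (by omega),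
    Option.map_some, Option.getD_some, List.getElem?_eq_getElem (by omega), h]

theorem get1_encodeE_of_inr {b : π} (hp1 : 1 ≤ p) (hp : p ≤ T.length) (h : get1 T p = Sum.inr b) :
    get1 (encodeE T) p =
      Sum.inr (distinctParams (prefixThrough (Sum.inr b) (T.drop p ++ T.take p))) := by
  rw [get1_eq_getElem hp1 hp] at h
  rw [get1, List.getD_eq_getElem?_getD, encodeE, List.getElem?_map, List.getElem?_range (by omega),
    Option.map_some, Option.getD_some, List.getElem?_eq_getElem (by omega), h]
  simp only [show p - 1 + 1 = p by omega,
    rotR_eq_rotate T (Nat.sub_le _ _), Nat.sub_sub_self hp, List.rotate_eq_drop_append_take hp]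
  rfl

end Encoding

section Cons

variable [DecidableEq σ] [DecidableEq π] [Inhabited σ] {S : List (σ ⊕ π)} {p : ℕ} {b c : π}

theorem get1_encodeE_inr_cons_one (S : List (σ ⊕ π)) (c : π) :
    get1 (encodeE (Sum.inr c :: S)) 1 =
      if leftPos S (Sum.inr c) = 0 then Sum.inr (distinctParams S + 1)
      else Sum.inr (distinctParams (S.take (leftPos S (Sum.inr c)))) := by
  rw [get1_encodeE_of_inr le_rfl (by simp) rfl, List.drop_one, List.take_one]
  simp only [List.tail_cons, List.head?_cons, Option.toList_some]
  by_cases h : Sum.inr c ∈ S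
  · rw [if_neg (leftPos_pos_of_mem h).ne', prefixThrough_append_of_mem h,
      prefixThrough_eq_take_leftPos h]
  · rw [if_pos (leftPos_eq_zero_iff.2 h), prefixThrough_append_of_notMem h,
      prefixThrough_cons_self, distinctParams_append_cons, List.append_nil,
      distinctParams_inr_cons_of_notMem h]

theorem get1_encodeE_cons_succ_of_ne_rightPos (y : σ ⊕ π) (hp1 : 1 ≤ p) (hp : p ≤ S.length)
    (h : (∃ a : σ, get1 S p = Sum.inl a) ∨ p ≠ rightPos S (get1 S p)) :
    get1 (encodeE (y :: S)) (p + 1) = get1 (encodeE S) p := by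
  have hcons : get1 (y :: S) (p + 1) = get1 S p := get1_cons_succ y S hp1
  have hlen : p + 1 ≤ (y :: S).length := by simpa
  rcases hS : get1 S p with a | b
  · rw [get1_encodeE_of_inl hp1 hp hS, get1_encodeE_of_inl (by omega) hlen (hcons.trans hS)]
  · have hne : p ≠ rightPos S (Sum.inr b) := by simpa [hS] using h
    have hb : Sum.inr b ∈ S.drop p := by
      rw [mem_drop_iff_lt_rightPos]
      exact lt_of_le_of_ne (le_rightPos_of_get1 hp1 hp hS) hne
    rw [get1_encodeE_of_inr hp1 hp hS, get1_encodeE_of_inr (by omega) hlen (hcons.trans hS),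
      List.drop_succ_cons, List.take_succ_cons, prefixThrough_append_of_mem hb,
      prefixThrough_append_of_mem hb]

section LastOccurrence

variable (hp1 : 1 ≤ p) (hp : p ≤ S.length) (hS : get1 S p = Sum.inr b)
  (hlast : p = rightPos S (Sum.inr b))
include hp1 hp hS hlast

theorem inr_mem_take_of_eq_rightPos : Sum.inr b ∈ S.take p := by
  exact mem_take_iff_leftPos.2
    ⟨leftPos_pos_of_mem (hS ▸ get1_mem hp1 hp), hlast ▸ leftPos_le_rightPos⟩

theorem get1_encodeE_of_eq_rightPos :
    get1 (encodeE S) p =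
      Sum.inr (distinctParams (S.drop p ++ S.take (leftPos S (Sum.inr b)))) := by
  have htake := inr_mem_take_of_eq_rightPos hp1 hp hS hlast
  rw [get1_encodeE_of_inr hp1 hp hS,
    prefixThrough_append_of_notMem (hlast ▸ notMem_drop_rightPos),
    prefixThrough_take_of_mem htake,
    prefixThrough_eq_take_leftPos (List.mem_of_mem_take htake)]

theorem get1_encodeE_cons_succ_of_eq_rightPos (y : σ ⊕ π) :
    get1 (encodeE (y :: S)) (p + 1) =
      Sum.inr (distinctParams (S.drop p ++ prefixThrough (Sum.inr b) (y :: S.take p))) := by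
  rw [get1_encodeE_of_inr (by omega) (by simpa) ((get1_cons_succ y S hp1).trans hS),
    List.drop_succ_cons, List.take_succ_cons,
    prefixThrough_append_of_notMem (hlast ▸ notMem_drop_rightPos)]

theorem get1_encodeE_inr_cons_succ_of_eq_rightPos_self :
    get1 (encodeE (Sum.inr b :: S)) (p + 1) = Sum.inr (distinctParams (S.drop p) + 1) := by
  rw [get1_encodeE_cons_succ_of_eq_rightPos hp1 hp hS hlast, prefixThrough_cons_self,
    distinctParams_append_cons, List.append_nil,
    distinctParams_inr_cons_of_notMem (hlast ▸ notMem_drop_rightPos)]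

theorem inr_notMem_drop_append_take_leftPos_iff (hbc : b ≠ c) :
    Sum.inr c ∉ S.drop p ++ S.take (leftPos S (Sum.inr b)) ↔
      leftPos S (Sum.inr c) = 0 ∨
        (leftPos S (Sum.inr b) < leftPos S (Sum.inr c) ∧
          leftPos S (Sum.inr c) ≤ rightPos S (Sum.inr c) ∧
          rightPos S (Sum.inr c) < rightPos S (Sum.inr b)) := by
  have hne := rightPos_ne_of_get1 (x := Sum.inr c) hp1 hp hS (by simpa using hbc.symm)
  have hle := leftPos_le_rightPos (W := S) (x := Sum.inr c)
  rw [List.mem_append, mem_drop_iff_lt_rightPos, mem_take_iff_leftPos]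
  have hzero (h : leftPos S (Sum.inr c) = 0) : rightPos S (Sum.inr c) = 0 :=
    rightPos_of_notMem (leftPos_eq_zero_iff.1 h)
  constructor <;> omega

theorem get1_encodeE_inr_cons_succ_of_eq_rightPos_of_ne (hbc : b ≠ c) :
    get1 (encodeE (Sum.inr c :: S)) (p + 1) =
      Sum.map id (· + if leftPos S (Sum.inr c) = 0 ∨
          (leftPos S (Sum.inr b) < leftPos S (Sum.inr c) ∧
            leftPos S (Sum.inr c) ≤ rightPos S (Sum.inr c) ∧
            rightPos S (Sum.inr c) < rightPos S (Sum.inr b)) then 1 else 0)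
        (get1 (encodeE S) p) := by
  have htake := inr_mem_take_of_eq_rightPos hp1 hp hS hlast
  rw [get1_encodeE_cons_succ_of_eq_rightPos hp1 hp hS hlast,
    prefixThrough_cons_of_ne (by simpa using hbc.symm), prefixThrough_take_of_mem htake,
    prefixThrough_eq_take_leftPos (List.mem_of_mem_take htake),
    get1_encodeE_of_eq_rightPos hp1 hp hS hlast, distinctParams_append_cons]
  have hwindow := inr_notMem_drop_append_take_leftPos_iff hp1 hp hS hlast hbc
  split_ifs with h
  · rw [distinctParams_inr_cons_of_notMem (hwindow.2 h)]
    rfl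
  · rw [distinctParams_inr_cons_of_mem (not_not.1 (mt hwindow.1 h))]
    rfl

end LastOccurrence

end Cons

theorem encode_cons_param_general [LinearOrder σ] [DecidableEq π] [Inhabited σ]
    (S : List (σ ⊕ π))
    (cp : π) :
    (get1 (encodeE (Sum.inr cp :: S)) 1
        = (if leftPos S (Sum.inr cp) = 0 then Sum.inr (distinctParams S + 1)
           else Sum.inr (distinctParams (S.take (leftPos S (Sum.inr cp)))) : σ ⊕ ℕ)) ∧
    (∀ p : ℕ, 1 ≤ p → p ≤ S.length →
      ((∃ a : σ, get1 S p = Sum.inl a) ∨ p ≠ rightPos S (get1 S p)) →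
      get1 (encodeE (Sum.inr cp :: S)) (p + 1) = get1 (encodeE S) p) ∧
    (∀ p : ℕ, ∀ b : π, 1 ≤ p → p ≤ S.length →
      get1 S p = Sum.inr b → p = rightPos S (Sum.inr b) →
      ((b = cp →
          get1 (encodeE (Sum.inr cp :: S)) (p + 1)
            = Sum.inr (distinctParams (S.drop p) + 1)) ∧
       (b ≠ cp →
          (leftPos S (Sum.inr cp) = 0 ∨
            (leftPos S (Sum.inr b) < leftPos S (Sum.inr cp) ∧
             leftPos S (Sum.inr cp) ≤ rightPos S (Sum.inr cp) ∧
             rightPos S (Sum.inr cp) < rightPos S (Sum.inr b))) →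
          get1 (encodeE (Sum.inr cp :: S)) (p + 1)
            = Sum.map id (· + 1) (get1 (encodeE S) p)) ∧
       (b ≠ cp →
          ¬ (leftPos S (Sum.inr cp) = 0 ∨
            (leftPos S (Sum.inr b) < leftPos S (Sum.inr cp) ∧
             leftPos S (Sum.inr cp) ≤ rightPos S (Sum.inr cp) ∧
             rightPos S (Sum.inr cp) < rightPos S (Sum.inr b))) →
          get1 (encodeE (Sum.inr cp :: S)) (p + 1) = get1 (encodeE S) p))) := by
  refine ⟨get1_encodeE_inr_cons_one S cp,
    fun p hp1 hp h => get1_encodeE_cons_succ_of_ne_rightPos _ hp1 hp h,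
    fun p b hp1 hp hS hlast => ⟨?_, fun hbc hc => ?_, fun hbc hc => ?_⟩⟩
  · rintro rfl
    exact get1_encodeE_inr_cons_succ_of_eq_rightPos_self hp1 hp hS hlast
  · rw [get1_encodeE_inr_cons_succ_of_eq_rightPos_of_ne hp1 hp hS hlast hbc, if_pos hc]
  · rw [get1_encodeE_inr_cons_succ_of_eq_rightPos_of_ne hp1 hp hS hlast hbc, if_neg hc]
    exact congrFun Sum.map_id_id _

/-- Let `T = cS` with `c ∈ Π`.  Then:
(i) `⟦T⟧[1] = |Π|_S| + 1` if `Left_S(c) = 0`, and `⟦T⟧[1] = |Π|_{S[1:Left_S(c)]}|` otherwise;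
(ii) for `1 ≤ p ≤ n`, if `S[p] ∈ Σ` or `p ≠ Right_S(S[p])` then `⟦T⟧[p+1] = ⟦S⟧[p]`;
(iii) if `S[p] = a ∈ Π` and `p = Right_S(a)` then `⟦T⟧[p+1] = |Π|_{S[p+1:n]}| + 1` if `a = c`;
`⟦T⟧[p+1] = ⟦S⟧[p] + 1` if `Left_S(c) = 0` or `Left_S(a) < Left_S(c) ≤ Right_S(c) < Right_S(a)`;
and `⟦T⟧[p+1] = ⟦S⟧[p]` otherwise. -/
theorem encode_cons_param [LinearOrder σ] [DecidableEq π] [Inhabited σ]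
    (d : σ) (hd : ∀ a : σ, d ≤ a)
    (S : List (σ ⊕ π)) (hS : EndsWith S d)
    (cp : π) :
    (get1 (encodeE (Sum.inr cp :: S)) 1
        = (if leftPos S (Sum.inr cp) = 0 then Sum.inr (distinctParams S + 1)
           else Sum.inr (distinctParams (S.take (leftPos S (Sum.inr cp)))) : σ ⊕ ℕ)) ∧
    (∀ p : ℕ, 1 ≤ p → p ≤ S.length →
      ((∃ a : σ, get1 S p = Sum.inl a) ∨ p ≠ rightPos S (get1 S p)) →
      get1 (encodeE (Sum.inr cp :: S)) (p + 1) = get1 (encodeE S) p) ∧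
    (∀ p : ℕ, ∀ b : π, 1 ≤ p → p ≤ S.length →
      get1 S p = Sum.inr b → p = rightPos S (Sum.inr b) →
      ((b = cp →
          get1 (encodeE (Sum.inr cp :: S)) (p + 1)
            = Sum.inr (distinctParams (S.drop p) + 1)) ∧
       (b ≠ cp →
          (leftPos S (Sum.inr cp) = 0 ∨
            (leftPos S (Sum.inr b) < leftPos S (Sum.inr cp) ∧
             leftPos S (Sum.inr cp) ≤ rightPos S (Sum.inr cp) ∧
             rightPos S (Sum.inr cp) < rightPos S (Sum.inr b))) →
          get1 (encodeE (Sum.inr cp :: S)) (p + 1)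
            = Sum.map id (· + 1) (get1 (encodeE S) p)) ∧
       (b ≠ cp →
          ¬ (leftPos S (Sum.inr cp) = 0 ∨
            (leftPos S (Sum.inr b) < leftPos S (Sum.inr cp) ∧
             leftPos S (Sum.inr cp) ≤ rightPos S (Sum.inr cp) ∧
             rightPos S (Sum.inr cp) < rightPos S (Sum.inr b))) →
          get1 (encodeE (Sum.inr cp :: S)) (p + 1) = get1 (encodeE S) p))) :=
  encode_cons_param_general S cp
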